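/- arXiv:1006.3400 — 2 statements merged into one kernel-verified Lean document; each statement's English description precedes it below -/
import Mathlib

section
/- Let (m, N, a) be a triple as in the context. Then ∑_{n=1}^{m−1} d_n = 1 + ((N − 2)·m − ∑_{i=1}^N gcd(a_i, m))/2. (The right-hand side is the genus of the curve y^m = ∏_{i=1}^N (x − t_i)^{a_i} with distinct branch points t_1, …, t_N, so this identity states that the genus equals the sum of the Hodge eigenspace dimensions.) -/
/-! Pairing `n` with `m - n`, the residues of `n * a` and `(m - n) * a` modulo `m` add up to `m`
unless `m ∣ n * a`, which happens for exactly `gcd(a, m) - 1` values of `n` in `[1, m - 1]`.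
Hence `∑_{n=1}^{m-1} (n * a mod m) = m * (m - gcd(a, m)) / 2`, and summing over the `a_i`
gives the genus formula. -/

open Finset

/-- The dimension `d_n` of the Hodge eigenspace: `d_n = (1/m)·∑_i ((n·a_i) mod m) − 1`,
where `(x mod m)` is the representative of `x` in `{0, …, m−1}` (here `Int.emod`,
which lands in `{0, …, m−1}` since `m > 0`). -/
def hodgeDim (m N : ℕ) (a : Fin N → ℤ) (n : ℤ) : ℚ :=
  ((∑ i, (n * a i) % (m : ℤ) :) : ℚ) / m - 1

/-- The hypotheses on a triple `(m, N, a)`: `m ≥ 2`, `N ≥ 4`, `1 ≤ a_i ≤ m − 1` for all `i`,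
`gcd(m, a_1, …, a_N) = 1`, and `a_1 + ⋯ + a_N ≡ 0 (mod m)`. -/
def IsTriple (m N : ℕ) (a : Fin N → ℤ) : Prop :=
  2 ≤ m ∧ 4 ≤ N ∧ (∀ i, 1 ≤ a i ∧ a i ≤ (m : ℤ) - 1) ∧
    Int.gcd (m : ℤ) (Finset.univ.gcd a) = 1 ∧ ((m : ℤ) ∣ ∑ i, a i)

/-- Condition (⋆): `N − 3 = ∑_{n=1}^{⌊(m−1)/2⌋} d_n·d_{m−n} + ε`, where
`ε = d_{m/2}(d_{m/2}+1)/2` if `m` is even and `ε = 0` if `m` is odd. -/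
def CondStar (m N : ℕ) (a : Fin N → ℤ) : Prop :=
  (N : ℚ) - 3 =
    (∑ n ∈ Finset.Icc 1 ((m - 1) / 2), hodgeDim m N a n * hodgeDim m N a ((m : ℤ) - n)) +
      if m % 2 = 0 then hodgeDim m N a (m / 2) * (hodgeDim m N a (m / 2) + 1) / 2 else 0

/-- Two `N`-tuples are equivalent (for the modulus `m`) if there is `t` with `gcd(t, m) = 1`
and a permutation `σ` with `a'_i ≡ t·a_{σ(i)} (mod m)` for all `i`. -/
def EquivTuple (m N : ℕ) (a a' : Fin N → ℤ) : Prop :=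
  ∃ t : ℤ, Int.gcd t m = 1 ∧ ∃ σ : Equiv.Perm (Fin N),
    ∀ i, a' i ≡ t * a (σ i) [ZMOD (m : ℤ)]

/-- The twenty triples, each given as the pair of `m` and the tuple `a`
(the number of branch points `N` being the length of the tuple). -/
def twentyTriples : List (ℕ × List ℕ) :=
  [(2, [1,1,1,1]), (2, [1,1,1,1,1,1]), (3, [1,1,2,2]), (4, [1,2,2,3]),
   (6, [2,3,3,4]), (3, [1,1,1,1,2]), (4, [1,1,1,1]), (4, [1,1,2,2,2]),
   (6, [1,3,4,4]), (3, [1,1,1,1,1,1]), (5, [1,3,3,3]), (6, [1,1,1,3]),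
   (6, [1,1,2,2]), (6, [2,2,2,3,3]), (8, [2,4,5,5]), (5, [2,2,2,2,2]),
   (7, [2,4,4,4]), (10, [3,5,6,6]), (9, [3,5,5,5]), (12, [4,6,7,7])]

theorem Int.dvd_mul_iff_div_gcd_dvd {m : ℤ} (hm : m ≠ 0) (a n : ℤ) :
    m ∣ n * a ↔ m / m.gcd a ∣ n := by
  rw [← dvd_mul_gcd_iff_dvd_mul]
  have hg : (m.gcd a : ℤ) ≠ 0 := by exact_mod_cast Int.gcd_ne_zero_left hm
  obtain ⟨k, hk⟩ := Int.gcd_dvd_left (a := m) (b := a)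
  generalize (m.gcd a : ℤ) = g at hg hk ⊢
  rw [hk, Int.mul_ediv_cancel_left _ hg, mul_comm g, mul_dvd_mul_iff_right hg]

theorem Int.emod_add_neg_emod (x m : ℤ) : x % m + -x % m = if m ∣ x then 0 else |m| := by
  rw [Int.neg_emod]
  split_ifs with h
  · simp [Int.emod_eq_zero_of_dvd h]
  · rw [Int.natCast_natAbs]; ring

theorem card_filter_dvd_mul_Icc {m : ℕ} (hm : 0 < m) (a : ℤ) :
    #{n ∈ Icc 1 (m - 1) | (m : ℤ) ∣ (n : ℕ) * a} = Int.gcd a m - 1 := by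
  have hm' : (m : ℤ) ≠ 0 := by exact_mod_cast hm.ne'
  rw [Int.gcd_comm]
  set g := Int.gcd m a
  have hgm : g ∣ m := by exact_mod_cast Int.gcd_dvd_left (a := m) (b := a)
  have hg : 0 < g := Int.gcd_pos_of_ne_zero_left a hm'
  have hdvd : ∀ n : ℕ, (m : ℤ) ∣ n * a ↔ m / g ∣ n := fun n => by
    rw [Int.dvd_mul_iff_div_gcd_dvd hm', ← Int.natCast_dvd_natCast, Int.natCast_div]
  rw [filter_congr fun n _ => hdvd n, ← zero_add 1, Icc_add_one_left_eq_Ioc,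
    Nat.Ioc_filter_dvd_card_eq_div]
  obtain ⟨k, hmk⟩ := hgm
  have hk : 0 < k := Nat.pos_of_mul_pos_left (hmk ▸ hm)
  rw [hmk, Nat.mul_div_cancel_left _ hg]
  refine Nat.div_eq_of_lt_le ?_ ?_
  · rw [Nat.sub_one_mul]; omega
  · rw [Nat.sub_add_cancel hg]; omega

theorem sum_Icc_neg_mul_emod (m : ℕ) (a : ℤ) :
    ∑ n ∈ Icc 1 (m - 1), -((n : ℤ) * a) % m = ∑ n ∈ Icc 1 (m - 1), (n : ℤ) * a % m := by
  refine sum_nbij' (fun n => m - n) (fun n => m - n) ?_ ?_ ?_ ?_ fun n hn => ?_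
  any_goals intro n hn; simp only [mem_Icc] at hn ⊢; omega
  rw [mem_Icc] at hn
  rw [Nat.cast_sub (by omega), show -((n : ℤ) * a) = (m - n) * a + m * (-a) by ring,
    Int.add_mul_emod_self_left]

theorem two_mul_sum_Icc_mul_emod {m : ℕ} (hm : 0 < m) (a : ℤ) :
    2 * ∑ n ∈ Icc 1 (m - 1), (n : ℤ) * a % m = m * (m - Int.gcd a m) := by
  have hg : Int.gcd a m ≤ m := Nat.le_of_dvd hm (by exact_mod_cast Int.gcd_dvd_right a m)
  have hg' : 0 < Int.gcd a m := Int.gcd_pos_of_ne_zero_right a (by exact_mod_cast hm.ne')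
  calc 2 * ∑ n ∈ Icc 1 (m - 1), (n : ℤ) * a % m
      = ∑ n ∈ Icc 1 (m - 1), ((n : ℤ) * a % m + -((n : ℤ) * a) % m) := by
        rw [sum_add_distrib, sum_Icc_neg_mul_emod, two_mul]
    _ = ∑ n ∈ Icc 1 (m - 1), if (m : ℤ) ∣ (n : ℕ) * a then 0 else (m : ℤ) :=
        sum_congr rfl fun n _ => by rw [Int.emod_add_neg_emod, Nat.abs_cast]
    _ = m * (m - Int.gcd a m) := by
        rw [sum_ite, sum_const_zero, zero_add, sum_const, filter_not,
          card_sdiff_of_subset (filter_subset _ _), card_filter_dvd_mul_Icc hm, Nat.card_Icc,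
          nsmul_eq_mul]
        push_cast [Nat.sub_sub_sub_cancel_right hg', hg]
        ring

/-- For a triple `(m, N, a)`:
`∑_{n=1}^{m−1} d_n = 1 + ((N − 2)·m − ∑_i gcd(a_i, m))/2` (the genus of the covering curve). -/
theorem sum_hodgeDim_eq_genus (m N : ℕ) (a : Fin N → ℤ)
    (htriple : IsTriple m N a) :
    ∑ n ∈ Finset.Icc 1 (m - 1), hodgeDim m N a n =
      1 + (((N : ℚ) - 2) * m - ∑ i, (Int.gcd (a i) m : ℚ)) / 2 := by
  have hm : 0 < m := zero_lt_two.trans_le htriple.1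
  have hcol (i : Fin N) : ∑ n ∈ Icc 1 (m - 1), (((n : ℤ) * a i % m : ℤ) : ℚ) =
      m * (m - Int.gcd (a i) m) / 2 := by
    rw [eq_div_iff two_ne_zero, mul_comm]
    exact_mod_cast two_mul_sum_Icc_mul_emod hm (a i)
  calc ∑ n ∈ Icc 1 (m - 1), hodgeDim m N a n
      = (∑ i, ∑ n ∈ Icc 1 (m - 1), (((n : ℤ) * a i % m : ℤ) : ℚ)) / m - (m - 1) := by
        simp only [hodgeDim, sum_sub_distrib, ← sum_div, sum_const, Nat.card_Icc,
          Nat.add_sub_cancel, nsmul_one, Nat.cast_pred hm]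
        push_cast [sum_comm (s := Icc 1 (m - 1))]
        rfl
    _ = 1 + ((N - 2) * m - ∑ i, (Int.gcd (a i) m : ℚ)) / 2 := by
        rw [sum_congr rfl fun i _ => hcol i, ← sum_div, ← mul_sum, sum_sub_distrib, sum_const,
          card_univ, Fintype.card_fin, nsmul_eq_mul]
        field_simp
        ring
end

section
/- Let (m, N, a) be a triple as in the context, let t be an integer with gcd(t, m) = 1, let σ be a permutation of {1, …, N}, and define a′ by a′_i := (t·a_{σ(i)}) mod m. Then (m, N, a′) again satisfies the hypotheses of the context, for every integer n with m ∤ n one has d_n(a′) = d_{t·n}(a), and (m, N, a′) satisfies condition (⋆) if and only if (m, N, a) does. In other words, the hypotheses and condition (⋆) are invariant under equivalence of triples. -/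
open Finset

/-!
Multiplying the entries by `t` and permuting them does not change the residues `n·a'_i mod m`
up to order, once `n` is replaced by `t·n`; this gives `d_n(a') = d_{tn}(a)`. The summand
`d_n·d_{m-n}` of (⋆) is an even, `m`-periodic function of `n`, so twice the sum in (⋆), plus the
terms at `0` and (for even `m`) `m/2`, is the sum over all residues mod `m`, which is unchanged
under the permutation `n ↦ t·n` of `ZMod m`. For even `m` the unit `t` is odd and so fixes `m/2`
modulo `m`, leaving the correction term `ε` unchanged as well.
-/

theorem sum_range_eq_add_two_nsmul_sum_Icc_half {M : Type*} [AddCommMonoid M] {m : ℕ}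
    (hm : 0 < m) (f : ℤ → M) (hf : ∀ x, f (m - x) = f x) :
    ∑ n ∈ range m, f n =
      f 0 + 2 • ∑ n ∈ Icc 1 ((m - 1) / 2), f n + if m % 2 = 0 then f ((m : ℤ) / 2) else 0 := by
  have hsplit : ∑ n ∈ Ico 1 m, f n =
      ∑ n ∈ Ioc 0 (m / 2), f n + ∑ n ∈ Ioc (m / 2) (m - 1), f n := by
    rw [sum_Ioc_consecutive _ (Nat.zero_le _) (by omega)]
    exact sum_congr (by ext; simp; omega) fun _ _ => rfl
  have hreflect : ∑ n ∈ Ioc (m / 2) (m - 1), f n = ∑ n ∈ Icc 1 ((m - 1) / 2), f n := by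
    refine sum_nbij' (fun n => m - n) (fun n => m - n) ?_ ?_ ?_ ?_ ?_ <;> intro n hn <;>
      simp only [mem_Ioc, mem_Icc] at hn ⊢
    iterate 4 omega
    rw [← hf]; congr 1; omega
  have hlow : ∑ n ∈ Ioc 0 (m / 2), f n =
      ∑ n ∈ Icc 1 ((m - 1) / 2), f n + if m % 2 = 0 then f ((m : ℤ) / 2) else 0 := by
    split_ifs with hp
    · rw [show Ioc 0 (m / 2) = Icc 1 ((m - 1) / 2 + 1) by ext; simp; omega,
        sum_Icc_succ_top (by omega)]
      congr 2; omega
    · rw [add_zero]; exact sum_congr (by ext; simp; omega) fun _ _ => rfl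
  rw [range_eq_Ico, sum_eq_sum_Ico_succ_bot hm, hsplit, hreflect, hlow, two_nsmul]
  push_cast; abel

theorem sum_range_natCast_eq_sum_univ {M : Type*} [AddCommMonoid M] {m : ℕ} [NeZero m]
    (g : ZMod m → M) : ∑ n ∈ range m, g n = ∑ x, g x :=
  sum_nbij' (fun n => n) ZMod.val (fun _ _ => mem_univ _)
    (fun x _ => mem_range.2 (ZMod.val_lt x)) (fun _ hn => ZMod.val_cast_of_lt (mem_range.1 hn))
    (fun x _ => ZMod.natCast_zmod_val x) fun _ _ => rfl

theorem mul_ediv_two_modEq_ediv_two {m t : ℤ} (hm : 2 ∣ m) (ht : IsCoprime t m) :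
    t * (m / 2) ≡ m / 2 [ZMOD m] := by
  obtain ⟨k, rfl⟩ : Odd t := Int.not_even_iff_odd.1 fun ⟨k, hk⟩ =>
    by simpa [Int.isUnit_iff] using ht.isUnit_of_dvd' ⟨k, by omega⟩ hm
  exact Int.modEq_iff_dvd.2 ⟨-k, by linear_combination (-k) * Int.ediv_mul_cancel hm⟩

section Periodic

variable {m : ℕ} {t : ℤ}

theorem sum_range_comp_mul_of_isCoprime {M : Type*} [AddCommMonoid M] (hm : m ≠ 0)
    {f : ℤ → M} (hf : ∀ x y, x ≡ y [ZMOD m] → f x = f y) (ht : IsCoprime t m) :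
    ∑ n ∈ range m, f (t * n) = ∑ n ∈ range m, f n := by
  have : NeZero m := ⟨hm⟩
  set g : ZMod m → M := fun x => f x.val
  have hfg : ∀ x : ℤ, f x = g x := fun x => hf _ _ <| by
    rw [ZMod.val_intCast]; exact (Int.mod_modEq x m).symm
  calc ∑ n ∈ range m, f (t * n) = ∑ x : ZMod m, g ((t : ZMod m) * x) := by
        simp only [hfg, Int.cast_mul, Int.cast_natCast]
        exact sum_range_natCast_eq_sum_univ fun x => g ((t : ZMod m) * x)
    _ = ∑ x, g x := Equiv.sum_comp (Units.mulLeft (ZMod.unitOfIsCoprime t ht)) g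
    _ = ∑ n ∈ range m, f n := by
        simp only [hfg, Int.cast_natCast]
        exact (sum_range_natCast_eq_sum_univ g).symm

theorem sum_Icc_half_comp_mul_of_isCoprime (hm : 0 < m) {f : ℤ → ℚ}
    (hf : ∀ x y, x ≡ y [ZMOD m] → f x = f y) (hneg : ∀ x, f (-x) = f x) (ht : IsCoprime t m) :
    ∑ n ∈ Icc 1 ((m - 1) / 2), f (t * n) = ∑ n ∈ Icc 1 ((m - 1) / 2), f n := by
  have hsym : ∀ s x : ℤ, f (s * (m - x)) = f (s * x) := fun s x => by
    rw [hf _ (-(s * x)) (Int.modEq_iff_dvd.2 ⟨-s, by ring⟩), hneg]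
  have hfull := sum_range_eq_add_two_nsmul_sum_Icc_half hm f (by simpa using hsym 1)
  have htwist := sum_range_eq_add_two_nsmul_sum_Icc_half hm (fun x => f (t * x)) (hsym t)
  rw [sum_range_comp_mul_of_isCoprime hm.ne' hf ht, mul_zero] at htwist
  simp only [nsmul_eq_mul] at hfull htwist
  split_ifs at hfull htwist with hp
  · rw [hf _ _ (mul_ediv_two_modEq_ediv_two (by omega) ht)] at htwist
    linarith
  · linarith

end Periodic

/-- The right-hand side of (⋆), with `d` in place of `n ↦ d_n`. -/
def starRHS (m : ℕ) (d : ℤ → ℚ) : ℚ :=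
  (∑ n ∈ Icc 1 ((m - 1) / 2), d n * d ((m : ℤ) - n)) +
    if m % 2 = 0 then d (m / 2) * (d (m / 2) + 1) / 2 else 0

theorem starRHS_comp_mul_of_isCoprime {m : ℕ} (hm : 0 < m) {d : ℤ → ℚ}
    (hd : ∀ x y, x ≡ y [ZMOD m] → d x = d y) {t : ℤ} (ht : IsCoprime t m) :
    starRHS m (fun n => d (t * n)) = starRHS m d := by
  have hterm : ∀ s x : ℤ, d (s * x) * d (s * (m - x)) = d (s * x) * d (-(s * x)) := fun s x =>
    congrArg (d (s * x) * ·) (hd _ _ (Int.modEq_iff_dvd.2 ⟨-s, by ring⟩))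
  have hsum := sum_Icc_half_comp_mul_of_isCoprime hm (f := fun x => d x * d (-x))
    (fun x y h => by rw [hd x y h, hd _ _ h.neg]) (fun x => by rw [neg_neg, mul_comm]) ht
  have hmid : m % 2 = 0 → d (t * (m / 2)) = d (m / 2) := fun hp =>
    hd _ _ (mul_ediv_two_modEq_ediv_two (by omega) ht)
  unfold starRHS
  beta_reduce
  congr 1
  · rw [sum_congr rfl fun (n : ℕ) _ => hterm t n, hsum]
    exact sum_congr rfl fun n _ => by simpa using (hterm 1 n).symm
  · split_ifs with hp
    · rw [hmid hp]
    · rfl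

theorem hodgeDim_congr {m N : ℕ} (a : Fin N → ℤ) {x y : ℤ} (h : x ≡ y [ZMOD m]) :
    hodgeDim m N a x = hodgeDim m N a y := by
  rw [hodgeDim, hodgeDim, sum_congr rfl fun i _ => h.mul_right (a i)]

theorem hodgeDim_of_modEq_mul {m N : ℕ} {a a' : Fin N → ℤ} {t : ℤ} (σ : Equiv.Perm (Fin N))
    (h : ∀ i, a' i ≡ t * a (σ i) [ZMOD m]) (n : ℤ) :
    hodgeDim m N a' n = hodgeDim m N a (t * n) := by
  have hterm : ∀ i, n * a' i % m = t * n * a (σ i) % m := fun i => by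
    rw [(h i).mul_left n, ← mul_assoc, mul_comm n t]
  rw [hodgeDim, hodgeDim, sum_congr rfl fun i _ => hterm i,
    Equiv.sum_comp σ fun j => t * n * a j % m]

section Triple

variable {ι : Type*} [Fintype ι] {m t : ℤ} {a a' : ι → ℤ}

theorem mul_emod_mem_Icc_of_isCoprime (ht : IsCoprime t m) {x : ℤ} (hx : x ∈ Set.Icc 1 (m - 1)) :
    t * x % m ∈ Set.Icc 1 (m - 1) := by
  obtain ⟨hx1, hxm⟩ := hx
  have hm : 0 < m := by omega
  have hndvd : ¬ m ∣ t * x := fun hdvd => by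
    have := Int.le_of_dvd (by omega) (ht.symm.dvd_of_dvd_mul_left hdvd)
    omega
  have := Int.emod_nonneg (t * x) hm.ne'
  have := Int.emod_lt_of_pos (t * x) hm
  have := mt Int.dvd_of_emod_eq_zero hndvd
  constructor <;> omega

theorem gcd_finsetGcd_eq_one_of_modEq_mul (σ : Equiv.Perm ι) (ha : Int.gcd m (univ.gcd a) = 1)
    (ht : IsCoprime t m) (h : ∀ i, a' i ≡ t * a (σ i) [ZMOD m]) :
    Int.gcd m (univ.gcd a') = 1 := by
  set g := Int.gcd m (univ.gcd a')
  have hgm : (g : ℤ) ∣ m := Int.gcd_dvd_left _ _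
  have hga : ∀ j, (g : ℤ) ∣ a j := fun j => by
    have hga' : (g : ℤ) ∣ a' (σ.symm j) := (Int.gcd_dvd_right _ _).trans (gcd_dvd (mem_univ _))
    have hgta : (g : ℤ) ∣ t * a j := by
      simpa using ((h (σ.symm j)).of_dvd hgm).dvd_iff.1 hga'
    exact (ht.of_isCoprime_of_dvd_right hgm).symm.dvd_of_dvd_mul_left hgta
  have : (g : ℤ) ∣ (1 : ℕ) := ha ▸ Int.dvd_coe_gcd hgm (dvd_gcd fun j _ => hga j)
  exact Nat.dvd_one.1 (Int.natCast_dvd_natCast.1 this)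

theorem dvd_sum_of_modEq_mul (σ : Equiv.Perm ι) (ha : m ∣ ∑ i, a i)
    (h : ∀ i, a' i ≡ t * a (σ i) [ZMOD m]) : m ∣ ∑ i, a' i := by
  have hsum : ∑ i, a' i ≡ t * ∑ i, a i [ZMOD m] := by
    rw [mul_sum, ← Equiv.sum_comp σ fun i => t * a i]
    exact Int.ModEq.sum fun i _ => h i
  exact hsum.dvd_iff.2 (ha.mul_left t)

end Triple

theorem IsTriple.of_eq_mul_emod {m N : ℕ} {a a' : Fin N → ℤ} (htriple : IsTriple m N a) {t : ℤ}
    (ht : IsCoprime t m) (σ : Equiv.Perm (Fin N)) (ha' : ∀ i, a' i = t * a (σ i) % m) :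
    IsTriple m N a' := by
  obtain ⟨hm, hN, hbound, hgcd, hdvd⟩ := htriple
  have hmod : ∀ i, a' i ≡ t * a (σ i) [ZMOD m] := fun i => ha' i ▸ Int.mod_modEq _ _
  exact ⟨hm, hN, fun i => ha' i ▸ mul_emod_mem_Icc_of_isCoprime ht (hbound (σ i)),
    gcd_finsetGcd_eq_one_of_modEq_mul σ hgcd ht hmod, dvd_sum_of_modEq_mul σ hdvd hmod⟩

/-- Invariance under equivalence: if `(m, N, a)` is a triple, `gcd(t, m) = 1`, `σ` is a
permutation, and `a'_i := (t·a_{σ(i)}) mod m`, then `(m, N, a')` is again a triple,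
`d_n(a') = d_{t·n}(a)` for every `n` with `m ∤ n`, and `(m, N, a')` satisfies condition (⋆)
if and only if `(m, N, a)` does. -/
theorem star_invariant_under_equivalence (m N : ℕ) (a : Fin N → ℤ)
    (htriple : IsTriple m N a) (t : ℤ) (ht : Int.gcd t m = 1) (σ : Equiv.Perm (Fin N))
    (a' : Fin N → ℤ) (ha' : ∀ i, a' i = (t * a (σ i)) % (m : ℤ)) :
    IsTriple m N a' ∧
    (∀ n : ℤ, ¬ (m : ℤ) ∣ n → hodgeDim m N a' n = hodgeDim m N a (t * n)) ∧
    (CondStar m N a' ↔ CondStar m N a) := by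
  have hcop : IsCoprime t m := Int.isCoprime_iff_gcd_eq_one.2 ht
  have hmod : ∀ i, a' i ≡ t * a (σ i) [ZMOD m] := fun i => ha' i ▸ Int.mod_modEq _ _
  have htwist : hodgeDim m N a' = fun n => hodgeDim m N a (t * n) :=
    funext (hodgeDim_of_modEq_mul σ hmod)
  refine ⟨htriple.of_eq_mul_emod hcop σ ha', fun n _ => congrFun htwist n, ?_⟩
  change _ = starRHS m _ ↔ _ = starRHS m _
  rw [htwist, starRHS_comp_mul_of_isCoprime (by have := htriple.1; omega)
    (fun _ _ => hodgeDim_congr a) hcop]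
end
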